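/- arXiv:1610.08681 — 2 statements merged into one kernel-verified Lean document; each statement's English description precedes it below -/
import Mathlib

section
/- Let α ∈ (0,1), B(α) = 1 − α + α/Γ(α), T > 0, n ∈ ℕ with n ≥ 1, τ = T/n and t_k = kτ. Let f : [0,T] → ℝ be continuously differentiable. Then for every k ∈ {1,…,n}, the right-endpoint (rectangle) approximation satisfies | (AB I^α f)(t_k) − [ (1−α)/B(α) · f(t_k) + (α τ^α/(B(α)Γ(α+1))) Σ_{j=0}^{k−1} f(t_{j+1}) ((k−j)^α − (k−j−1)^α) ] | ≤ (τ t_k^α/(B(α)Γ(α))) · sup_{s∈[0,t_k]} |f′(s)|. -/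
/-!
The local term `(1 - α) / B · f (t k)` cancels. On the cell `[t j, t (j + 1)]` the scheme
weight `τ ^ α ((k - j) ^ α - (k - j - 1) ^ α) / α` is exactly the integral of the kernel
`(t k - s) ^ (α - 1)`, so the error is `∑ j, ∫ (f s - f (t (j + 1))) (t k - s) ^ (α - 1)` over
the cells. By the mean value theorem `|f s - f (t (j + 1))| ≤ τ · sup |f'|`, and the kernel is
nonnegative with total integral `(t k) ^ α / α`.
-/

open Set Finset MeasureTheory intervalIntegral

theorem abs_integral_sub_const_mul_le {f w : ℝ → ℝ} {a b c δ : ℝ} (hab : a ≤ b)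
    (hw : IntervalIntegrable w volume a b) (hw0 : ∀ s ∈ Icc a b, 0 ≤ w s)
    (hf : ∀ s ∈ Icc a b, |f s - c| ≤ δ) :
    |∫ s in a..b, (f s - c) * w s| ≤ δ * ∫ s in a..b, w s := by
  rw [← intervalIntegral.integral_const_mul, ← Real.norm_eq_abs]
  refine intervalIntegral.norm_integral_le_of_norm_le hab (ae_of_all _ fun s hs => ?_)
    (hw.const_mul δ)
  have hs' : s ∈ Icc a b := Ioc_subset_Icc_self hs
  rw [Real.norm_eq_abs, abs_mul, abs_of_nonneg (hw0 s hs')]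
  exact mul_le_mul_of_nonneg_right (hf s hs') (hw0 s hs')

theorem abs_integral_mul_sub_right_endpoint_sum_le {f w : ℝ → ℝ} {t : ℕ → ℝ} {k : ℕ}
    {δ : ℝ} (ht : Monotone t)
    (hfw : IntervalIntegrable (fun s => f s * w s) volume (t 0) (t k))
    (hw : IntervalIntegrable w volume (t 0) (t k))
    (hw0 : ∀ s ∈ Icc (t 0) (t k), 0 ≤ w s)
    (hosc : ∀ j < k, ∀ s ∈ Icc (t j) (t (j + 1)), |f s - f (t (j + 1))| ≤ δ) :
    |(∫ s in t 0..t k, f s * w s) -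
        ∑ j ∈ range k, f (t (j + 1)) * ∫ s in t j..t (j + 1), w s| ≤
      δ * ∫ s in t 0..t k, w s := by
  have hcell : ∀ j < k, Icc (t j) (t (j + 1)) ⊆ Icc (t 0) (t k) := fun j hj =>
    Icc_subset_Icc (ht (Nat.zero_le j)) (ht hj)
  have hint : ∀ {g : ℝ → ℝ}, IntervalIntegrable g volume (t 0) (t k) →
      ∀ j < k, IntervalIntegrable g volume (t j) (t (j + 1)) := fun hg j hj =>
    hg.mono_set <| by
      rw [uIcc_of_le (ht (Nat.le_succ j)), uIcc_of_le (ht (Nat.zero_le k))]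
      exact hcell j hj
  have hsplit : (∫ s in t 0..t k, f s * w s) -
      ∑ j ∈ range k, f (t (j + 1)) * ∫ s in t j..t (j + 1), w s =
      ∑ j ∈ range k, ∫ s in t j..t (j + 1), (f s - f (t (j + 1))) * w s := by
    rw [← sum_integral_adjacent_intervals (hint hfw), ← sum_sub_distrib]
    refine sum_congr rfl fun j hj => ?_
    rw [← intervalIntegral.integral_const_mul,
      ← intervalIntegral.integral_sub (hint hfw j (mem_range.1 hj))
        ((hint hw j (mem_range.1 hj)).const_mul _)]
    simp only [sub_mul]
  calc _ = |∑ j ∈ range k, ∫ s in t j..t (j + 1), (f s - f (t (j + 1))) * w s| := by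
        rw [hsplit]
    _ ≤ ∑ j ∈ range k, δ * ∫ s in t j..t (j + 1), w s := by
        refine (abs_sum_le_sum_abs _ _).trans (sum_le_sum fun j hj => ?_)
        have hj := mem_range.1 hj
        exact abs_integral_sub_const_mul_le (ht (Nat.le_succ j)) (hint hw j hj)
          (fun s hs => hw0 s (hcell j hj hs)) (hosc j hj)
    _ = δ * ∫ s in t 0..t k, w s := by
        rw [← mul_sum, sum_integral_adjacent_intervals (hint hw)]

theorem abs_sub_right_le_of_hasDerivWithinAt {f f' : ℝ → ℝ} {a b s M : ℝ}
    (hf : ∀ x ∈ Icc a b, HasDerivWithinAt f (f' x) (Icc a b) x)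
    (hM : ∀ x ∈ Icc a b, |f' x| ≤ M) (hs : s ∈ Icc a b) :
    |f s - f b| ≤ M * (b - a) := by
  have hb : b ∈ Icc a b := right_mem_Icc.2 (hs.1.trans hs.2)
  have := (convex_Icc a b).norm_image_sub_le_of_norm_hasDerivWithin_le hf hM hs hb
  rw [Real.norm_eq_abs, Real.norm_eq_abs, abs_of_nonneg (sub_nonneg.2 hs.2)] at this
  rw [abs_sub_comm]
  exact this.trans
    (mul_le_mul_of_nonneg_left (by linarith [hs.1]) ((abs_nonneg _).trans (hM b hb)))

theorem intervalIntegrable_sub_rpow_sub_one {α : ℝ} (hα : 0 < α) (c a b : ℝ) :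
    IntervalIntegrable (fun s => (c - s) ^ (α - 1)) volume a b := by
  simpa using (intervalIntegrable_rpow' (a := c - a) (b := c - b)
    (by linarith : (-1 : ℝ) < α - 1)).comp_sub_left c

theorem integral_sub_rpow_sub_one {α : ℝ} (hα : 0 < α) (c a b : ℝ) :
    ∫ s in a..b, (c - s) ^ (α - 1) = ((c - a) ^ α - (c - b) ^ α) / α := by
  rw [integral_comp_sub_left (fun x : ℝ => x ^ (α - 1)) c,
    integral_rpow (Or.inl (by linarith)), sub_add_cancel]

theorem integral_grid_cell_sub_rpow_sub_one {α τ : ℝ} (hα : 0 < α) (hτ : 0 ≤ τ)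
    {j k : ℕ} (hjk : j < k) :
    ∫ s in (j : ℝ) * τ..((j + 1 : ℕ) : ℝ) * τ, ((k : ℝ) * τ - s) ^ (α - 1) =
      τ ^ α * (((k : ℝ) - j) ^ α - ((k : ℝ) - j - 1) ^ α) / α := by
  have hjk' : (j : ℝ) + 1 ≤ k := by exact_mod_cast hjk
  rw [integral_sub_rpow_sub_one hα, Nat.cast_succ, ← sub_mul, ← sub_mul,
    Real.mul_rpow (by linarith) hτ, Real.mul_rpow (by linarith) hτ, sub_add_eq_sub_sub]
  ring

theorem abs_integral_mul_rpow_sub_rectangle_sum_le {f f' : ℝ → ℝ} {α τ M : ℝ} {k : ℕ}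
    (hα : 0 < α) (hτ : 0 < τ)
    (hf : ∀ s ∈ Icc 0 ((k : ℝ) * τ), HasDerivWithinAt f (f' s) (Icc 0 ((k : ℝ) * τ)) s)
    (hM : ∀ s ∈ Icc 0 ((k : ℝ) * τ), |f' s| ≤ M) :
    |(∫ s in (0 : ℝ)..k * τ, f s * (k * τ - s) ^ (α - 1)) - τ ^ α / α * ∑ j ∈ range k,
        f ((j + 1 : ℕ) * τ) * (((k : ℝ) - j) ^ α - ((k : ℝ) - j - 1) ^ α)|
      ≤ M * τ * ((k * τ) ^ α / α) := by
  have hosc : ∀ j < k, ∀ s ∈ Icc ((j : ℝ) * τ) (((j + 1 : ℕ) : ℝ) * τ),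
      |f s - f (((j + 1 : ℕ) : ℝ) * τ)| ≤ M * τ := by
    intro j hj s hs
    have hcell : Icc ((j : ℝ) * τ) (((j + 1 : ℕ) : ℝ) * τ) ⊆ Icc 0 ((k : ℝ) * τ) :=
      Icc_subset_Icc (by positivity) (by gcongr; exact_mod_cast hj)
    have hlen : ((j + 1 : ℕ) : ℝ) * τ - j * τ = τ := by push_cast; ring
    simpa only [hlen] using abs_sub_right_le_of_hasDerivWithinAt
      (fun x hx => (hf x (hcell hx)).mono hcell) (fun x hx => hM x (hcell hx)) hs
  have hfc : ContinuousOn f (Icc 0 ((k : ℝ) * τ)) := fun x hx =>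
    (hf x hx).continuousWithinAt
  have hfw :
      IntervalIntegrable (fun s => f s * ((k : ℝ) * τ - s) ^ (α - 1)) volume 0 (k * τ) :=
    (intervalIntegrable_sub_rpow_sub_one hα _ _ _).continuousOn_mul <|
      hfc.mono (Set.uIcc_of_le (by positivity)).subset
  have hquad := abs_integral_mul_sub_right_endpoint_sum_le
    (fun i j hij => mul_le_mul_of_nonneg_right (Nat.cast_le.2 hij) hτ.le)
    (by rwa [Nat.cast_zero, zero_mul])
    (intervalIntegrable_sub_rpow_sub_one hα _ _ _)
    (fun s hs => Real.rpow_nonneg (sub_nonneg.2 hs.2) _) hosc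
  rw [Nat.cast_zero, zero_mul, integral_sub_rpow_sub_one hα, sub_zero, sub_self,
    Real.zero_rpow hα.ne', sub_zero] at hquad
  convert hquad using 3
  rw [mul_sum]
  refine sum_congr rfl fun j hj => ?_
  rw [integral_grid_cell_sub_rpow_sub_one hα hτ.le (mem_range.1 hj)]
  ring

theorem atangana_baleanu_integral_rectangle_error_general
    (α T : ℝ) (hα : α ∈ Set.Ioo (0 : ℝ) 1) (hT : 0 < T)
    (B : ℝ) (hB : B = 1 - α + α / Real.Gamma α)
    (n : ℕ)
    (f f' : ℝ → ℝ)
    (hf : ∀ s ∈ Set.Icc (0 : ℝ) T, HasDerivWithinAt f (f' s) (Set.Icc (0 : ℝ) T) s)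
    (hf' : ContinuousOn f' (Set.Icc (0 : ℝ) T))
    (τ : ℝ) (hτ : τ = T / n)
    (t : ℕ → ℝ) (ht : ∀ i, t i = (i : ℝ) * τ)
    (k : ℕ) (hk1 : 1 ≤ k) (hkn : k ≤ n) :
    |(((1 - α) / B) * f (t k) +
          (α / (B * Real.Gamma α)) * (∫ s in (0 : ℝ)..t k, f s * (t k - s) ^ (α - 1))) -
        (((1 - α) / B) * f (t k) +
          (α * τ ^ α / (B * Real.Gamma (α + 1))) *
            ∑ j ∈ Finset.range k,
              f (t (j + 1)) * (((k : ℝ) - (j : ℝ)) ^ α - ((k : ℝ) - (j : ℝ) - 1) ^ α))|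
      ≤ (τ * (t k) ^ α / (B * Real.Gamma α)) *
          sSup ((fun s => |f' s|) '' Set.Icc (0 : ℝ) (t k)) := by
  obtain ⟨hα0, hα1⟩ := hα
  obtain rfl : t = fun i : ℕ => (i : ℝ) * τ := funext ht
  have hΓ : 0 < Real.Gamma α := Real.Gamma_pos_of_pos hα0
  have hB0 : 0 < B := by rw [hB]; linarith [div_pos hα0 hΓ]
  have hn0 : (0 : ℝ) < n := Nat.cast_pos.2 (hk1.trans hkn)
  have hτ0 : 0 < τ := hτ ▸ div_pos hT hn0
  have hsub : Icc 0 ((k : ℝ) * τ) ⊆ Icc 0 T := Icc_subset_Icc_right <| by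
    rw [hτ, mul_div_left_comm]
    exact mul_le_of_le_one_right hT.le ((div_le_one hn0).2 (Nat.cast_le.2 hkn))
  set M := sSup ((fun s => |f' s|) '' Icc (0 : ℝ) (k * τ))
  have hrect := abs_integral_mul_rpow_sub_rectangle_sum_le hα0 hτ0
    (fun x hx => (hf x (hsub hx)).mono hsub)
    (fun x hx => (hf'.mono hsub).abs.le_sSup_image_Icc hx)
  have hc : 0 < α / (B * Real.Gamma α) := by positivity
  rw [add_sub_add_left_eq_sub, Real.Gamma_add_one hα0.ne']
  calc _ = |α / (B * Real.Gamma α) *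
        ((∫ s in (0 : ℝ)..k * τ, f s * (k * τ - s) ^ (α - 1)) -
          τ ^ α / α * ∑ j ∈ range k,
            f ((j + 1 : ℕ) * τ) * (((k : ℝ) - j) ^ α - ((k : ℝ) - j - 1) ^ α))| := by
        congr 1
        field_simp
    _ ≤ α / (B * Real.Gamma α) * (M * τ * ((k * τ) ^ α / α)) := by
        rw [abs_mul, abs_of_pos hc]
        exact mul_le_mul_of_nonneg_left hrect hc.le
    _ = _ := by field_simp

/-- Right-endpoint (rectangle) numerical scheme error for the Atangana–Baleanu
fractional integral of a continuously differentiable function `f` on `[0, T]`. -/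
theorem atangana_baleanu_integral_rectangle_error
    (α T : ℝ) (hα : α ∈ Set.Ioo (0 : ℝ) 1) (hT : 0 < T)
    (B : ℝ) (hB : B = 1 - α + α / Real.Gamma α)
    (n : ℕ) (hn : 1 ≤ n)
    (f f' : ℝ → ℝ)
    (hf : ∀ s ∈ Set.Icc (0 : ℝ) T, HasDerivWithinAt f (f' s) (Set.Icc (0 : ℝ) T) s)
    (hf' : ContinuousOn f' (Set.Icc (0 : ℝ) T))
    (τ : ℝ) (hτ : τ = T / n)
    (t : ℕ → ℝ) (ht : ∀ i, t i = (i : ℝ) * τ)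
    (k : ℕ) (hk1 : 1 ≤ k) (hkn : k ≤ n) :
    |(((1 - α) / B) * f (t k) +
          (α / (B * Real.Gamma α)) * (∫ s in (0 : ℝ)..t k, f s * (t k - s) ^ (α - 1))) -
        (((1 - α) / B) * f (t k) +
          (α * τ ^ α / (B * Real.Gamma (α + 1))) *
            ∑ j ∈ Finset.range k,
              f (t (j + 1)) * (((k : ℝ) - (j : ℝ)) ^ α - ((k : ℝ) - (j : ℝ) - 1) ^ α))|
      ≤ (τ * (t k) ^ α / (B * Real.Gamma α)) *
          sSup ((fun s => |f' s|) '' Set.Icc (0 : ℝ) (t k)) :=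
  atangana_baleanu_integral_rectangle_error_general α T hα hT B hB n f f' hf hf' τ hτ t ht k hk1 hkn
end

section
/- Let E be a real Banach space, α ∈ (0,1), B(α) = 1 − α + α/Γ(α), let g : E → E be Lipschitz continuous with constant C ≥ 0, let φ_c ∈ E, and let T₁ > 0 satisfy C · ( (1−α)/B(α) + T₁^α/(B(α)Γ(α)) ) < 1. Then there exists a unique continuous function φ : [0,T₁] → E such that for all t ∈ [0,T₁], φ(t) = φ_c + ((1−α)/B(α)) g(φ(t)) + (α/(B(α)Γ(α))) ∫_0^t (t−s)^{α−1} g(φ(s)) ds. -/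
/-!
The integral equation says that `φ` is a fixed point of
`Φ φ (t) = φ_c + a g(φ(t)) + b ∫₀ᵗ (t - s)^(α - 1) g(φ(s)) ds` with `a = (1 - α)/B(α)` and
`b = α/(B(α)Γ(α))`. Since `∫₀ᵗ (t - s)^(α - 1) ds = t^α/α`, the map `Φ` is Lipschitz on
`C([0,T₁], E)` with constant `C (a + b T₁^α/α)`, which is the smallness hypothesis, so `Φ` is a
contraction; it preserves continuity because the kernel integral of a bounded function is
`α`-Hölder in `t`. Banach's fixed point theorem gives the solution, and any continuous solution,
restricted to `[0,T₁]`, is a fixed point of `Φ`, hence unique.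
-/

open Set MeasureTheory intervalIntegral Filter Topology Function
open scoped NNReal

section Kernel

variable {E : Type*} [NormedAddCommGroup E] [NormedSpace ℝ E] {α : ℝ}

theorem intervalIntegrable_sub_rpow (hα : 0 < α) (c a b : ℝ) :
    IntervalIntegrable (fun s => (c - s) ^ (α - 1)) volume a b := by
  simpa using (intervalIntegrable_rpow' (a := c - a) (b := c - b) (r := α - 1)
    (by linarith)).comp_sub_left c

theorem integral_sub_rpow (hα : 0 < α) (c a b : ℝ) :
    ∫ s in a..b, (c - s) ^ (α - 1) = ((c - a) ^ α - (c - b) ^ α) / α := by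
  rw [integral_comp_sub_left (fun x : ℝ => x ^ (α - 1)) c, integral_rpow (Or.inl (by linarith)),
    sub_add_cancel]

theorem norm_integral_sub_rpow_smul_le (hα : 0 < α) {h : ℝ → E} {a b c M : ℝ} (hab : a ≤ b)
    (hbc : b ≤ c) (hM : ∀ s ∈ Ioc a b, ‖h s‖ ≤ M) :
    ‖∫ s in a..b, (c - s) ^ (α - 1) • h s‖ ≤ ((c - a) ^ α - (c - b) ^ α) / α * M := by
  rw [← integral_sub_rpow hα, ← intervalIntegral.integral_mul_const]
  refine norm_integral_le_of_norm_le hab (ae_of_all _ fun s hs => ?_)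
    ((intervalIntegrable_sub_rpow hα c a b).mul_const M)
  have hkernel : 0 ≤ (c - s) ^ (α - 1) := Real.rpow_nonneg (by linarith [hs.2]) _
  rw [norm_smul, Real.norm_of_nonneg hkernel]
  exact mul_le_mul_of_nonneg_left (hM s hs) hkernel

/-- The Riemann–Liouville integral of order `α` of `f`, without its factor `1/Γ(α)`. -/
noncomputable def powerKernelIntegral (α : ℝ) (f : ℝ → E) (t : ℝ) : E :=
  ∫ s in (0 : ℝ)..t, (t - s) ^ (α - 1) • f s

theorem norm_powerKernelIntegral_sub_le (hα : 0 < α) (hα1 : α ≤ 1) {h : ℝ → E} {M t t' : ℝ}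
    (hh : ContinuousOn h (Icc 0 t')) (hM : ∀ s ∈ Icc 0 t', ‖h s‖ ≤ M) (ht : 0 ≤ t)
    (htt' : t ≤ t') :
    ‖powerKernelIntegral α h t' - powerKernelIntegral α h t‖ ≤ 2 * M * (t' - t) ^ α / α := by
  have hM0 : 0 ≤ M := (norm_nonneg _).trans (hM 0 ⟨le_rfl, ht.trans htt'⟩)
  have hint : ∀ c {u v}, 0 ≤ u → u ≤ v → v ≤ t' →
      IntervalIntegrable (fun s => (c - s) ^ (α - 1) • h s) volume u v := fun c u v hu huv hv =>
    (intervalIntegrable_sub_rpow hα c u v).smul_continuousOn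
      (hh.mono (by rw [uIcc_of_le huv]; exact Icc_subset_Icc hu hv))
  have hsplit : powerKernelIntegral α h t' - powerKernelIntegral α h t =
      (∫ s in (0 : ℝ)..t, ((t' - s) ^ (α - 1) - (t - s) ^ (α - 1)) • h s) +
        ∫ s in t..t', (t' - s) ^ (α - 1) • h s := by
    simp only [powerKernelIntegral, sub_smul]
    rw [integral_sub (hint t' le_rfl ht htt') (hint t le_rfl ht htt'),
      ← integral_add_adjacent_intervals (hint t' le_rfl ht htt') (hint t' ht htt' le_rfl)]
    abel
  have hnear : ‖∫ s in t..t', (t' - s) ^ (α - 1) • h s‖ ≤ (t' - t) ^ α / α * M := by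
    simpa [Real.zero_rpow hα.ne'] using
      norm_integral_sub_rpow_smul_le hα htt' le_rfl fun s hs => hM s ⟨ht.trans hs.1.le, hs.2⟩
  -- the kernel difference is signed only off `s = t`, where `0 ^ (α - 1)` is a junk value
  have hfar : ‖∫ s in (0 : ℝ)..t, ((t' - s) ^ (α - 1) - (t - s) ^ (α - 1)) • h s‖ ≤
      (t' - t) ^ α / α * M := by
    calc _ ≤ ∫ s in (0 : ℝ)..t, ((t - s) ^ (α - 1) - (t' - s) ^ (α - 1)) * M := by
          refine norm_integral_le_of_norm_le ht ?_ (((intervalIntegrable_sub_rpow hα t 0 t).sub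
            (intervalIntegrable_sub_rpow hα t' 0 t)).mul_const M)
          filter_upwards [volume.ae_ne t] with s hst hs
          have hmono : (t' - s) ^ (α - 1) ≤ (t - s) ^ (α - 1) :=
            Real.rpow_le_rpow_of_nonpos (sub_pos.2 (lt_of_le_of_ne hs.2 hst)) (by linarith)
              (by linarith)
          rw [norm_smul, Real.norm_eq_abs, abs_of_nonpos (sub_nonpos.2 hmono), neg_sub]
          exact mul_le_mul_of_nonneg_left (hM s ⟨hs.1.le, hs.2.trans htt'⟩) (sub_nonneg.2 hmono)
      _ = (t ^ α - t' ^ α + (t' - t) ^ α) / α * M := by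
          rw [intervalIntegral.integral_mul_const, integral_sub (intervalIntegrable_sub_rpow hα t 0 t)
            (intervalIntegrable_sub_rpow hα t' 0 t), integral_sub_rpow hα, integral_sub_rpow hα,
            sub_self, sub_zero, sub_zero, Real.zero_rpow hα.ne']
          ring
      _ ≤ (t' - t) ^ α / α * M := by
          gcongr
          linarith [Real.rpow_le_rpow ht htt' hα.le]
  calc _ ≤ (t' - t) ^ α / α * M + (t' - t) ^ α / α * M := by
        rw [hsplit]; exact norm_add_le_of_le hfar hnear
    _ = 2 * M * (t' - t) ^ α / α := by ring

theorem continuousOn_powerKernelIntegral (hα : 0 < α) (hα1 : α ≤ 1) {h : ℝ → E} {T : ℝ}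
    (hh : ContinuousOn h (Icc 0 T)) : ContinuousOn (powerKernelIntegral α h) (Icc 0 T) := by
  obtain ⟨M, hM⟩ := isCompact_Icc.exists_bound_of_continuousOn hh
  intro t₀ ht₀
  have hholder : ∀ t ∈ Icc 0 T, dist (powerKernelIntegral α h t) (powerKernelIntegral α h t₀) ≤
      2 * M * |t - t₀| ^ α / α := by
    intro t ht
    rcases le_total t t₀ with htt₀ | ht₀t
    · rw [dist_comm, dist_eq_norm, abs_sub_comm, abs_of_nonneg (sub_nonneg.2 htt₀)]
      exact norm_powerKernelIntegral_sub_le hα hα1 (hh.mono (Icc_subset_Icc_right ht₀.2))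
        (fun s hs => hM s ⟨hs.1, hs.2.trans ht₀.2⟩) ht.1 htt₀
    · rw [dist_eq_norm, abs_of_nonneg (sub_nonneg.2 ht₀t)]
      exact norm_powerKernelIntegral_sub_le hα hα1 (hh.mono (Icc_subset_Icc_right ht.2))
        (fun s hs => hM s ⟨hs.1, hs.2.trans ht.2⟩) ht₀.1 ht₀t
  have hlim : Tendsto (fun t => 2 * M * |t - t₀| ^ α / α) (𝓝 t₀) (𝓝 0) := by
    have := Real.continuous_rpow_const hα.le
    have hcont : Continuous fun t : ℝ => 2 * M * |t - t₀| ^ α / α := by fun_prop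
    simpa [Real.zero_rpow hα.ne'] using hcont.tendsto t₀
  exact tendsto_iff_dist_tendsto_zero.2 <| squeeze_zero' (.of_forall fun _ => dist_nonneg)
    (eventually_mem_nhdsWithin.mono hholder) (hlim.mono_left nhdsWithin_le_nhds)

end Kernel

section Operator

variable {E : Type*} [NormedAddCommGroup E] [NormedSpace ℝ E] {α a b T t : ℝ} {g : E → E} {φc : E} {φ ψ : ℝ → E}

/-- For `a = (1 - α)/B(α)` and `b = α/(B(α)Γ(α))` this is `φ_c + (AB I^α g(φ))(t)`. -/
noncomputable def abOperator (α a b : ℝ) (g : E → E) (φc : E) (φ : ℝ → E) (t : ℝ) : E :=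
  φc + a • g (φ t) + b • powerKernelIntegral α (g ∘ φ) t

theorem continuousOn_abOperator (hα : 0 < α) (hα1 : α ≤ 1) (hg : Continuous g)
    (hφ : ContinuousOn φ (Icc 0 T)) : ContinuousOn (abOperator α a b g φc φ) (Icc 0 T) :=
  (continuousOn_const.add (continuousOn_const.smul (hg.comp_continuousOn hφ))).add
    (continuousOn_const.smul (continuousOn_powerKernelIntegral hα hα1 (hg.comp_continuousOn hφ)))

theorem abOperator_congr (hφψ : EqOn φ ψ (Icc 0 T)) (ht : t ∈ Icc 0 T) :
    abOperator α a b g φc φ t = abOperator α a b g φc ψ t := by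
  have hsub : uIcc 0 t ⊆ Icc 0 T := by rw [uIcc_of_le ht.1]; exact Icc_subset_Icc_right ht.2
  simp only [abOperator, powerKernelIntegral, hφψ ht]
  congr 2
  exact integral_congr fun s hs => by simp only [comp_apply, hφψ (hsub hs)]

theorem norm_abOperator_sub_le {K : ℝ≥0} {d : ℝ} (hα : 0 < α) (ha : 0 ≤ a) (hb : 0 ≤ b)
    (hg : LipschitzWith K g) (hφ : ContinuousOn φ (Icc 0 t)) (hψ : ContinuousOn ψ (Icc 0 t))
    (ht : 0 ≤ t) (hd : ∀ s ∈ Icc 0 t, ‖φ s - ψ s‖ ≤ d) :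
    ‖abOperator α a b g φc φ t - abOperator α a b g φc ψ t‖ ≤ K * (a + b * t ^ α / α) * d := by
  have hint : ∀ χ : ℝ → E, ContinuousOn χ (Icc 0 t) →
      IntervalIntegrable (fun s => (t - s) ^ (α - 1) • g (χ s)) volume 0 t := fun χ hχ =>
    (intervalIntegrable_sub_rpow hα t 0 t).smul_continuousOn
      (by rw [uIcc_of_le ht]; exact hg.continuous.comp_continuousOn hχ)
  have hdiff : abOperator α a b g φc φ t - abOperator α a b g φc ψ t =
      a • (g (φ t) - g (ψ t)) + b • ∫ s in (0 : ℝ)..t, (t - s) ^ (α - 1) • (g (φ s) - g (ψ s)) := by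
    simp only [abOperator, powerKernelIntegral, Function.comp, smul_sub]
    rw [integral_sub (hint φ hφ) (hint ψ hψ)]
    module
  have hgd : ∀ s ∈ Icc 0 t, ‖g (φ s) - g (ψ s)‖ ≤ K * d := fun s hs =>
    (hg.norm_sub_le _ _).trans (mul_le_mul_of_nonneg_left (hd s hs) K.2)
  have hkernel : ‖∫ s in (0 : ℝ)..t, (t - s) ^ (α - 1) • (g (φ s) - g (ψ s))‖ ≤
      t ^ α / α * (K * d) := by
    simpa [Real.zero_rpow hα.ne'] using
      norm_integral_sub_rpow_smul_le hα ht le_rfl fun s hs => hgd s (Ioc_subset_Icc_self hs)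
  calc _ ≤ a * (K * d) + b * (t ^ α / α * (K * d)) := by
        rw [hdiff]
        refine norm_add_le_of_le ?_ ?_
        · rw [norm_smul, Real.norm_of_nonneg ha]; gcongr; exact hgd t ⟨ht, le_rfl⟩
        · rw [norm_smul, Real.norm_of_nonneg hb]; gcongr
    _ = K * (a + b * t ^ α / α) * d := by ring

variable (α a b g φc) in
noncomputable def abMap (hα : 0 < α) (hα1 : α ≤ 1) (hg : Continuous g) (hT : 0 ≤ T)
    (f : C(Icc 0 T, E)) : C(Icc 0 T, E) :=
  ⟨(Icc 0 T).domRestrict (abOperator α a b g φc (IccExtend hT f)),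
    (continuousOn_abOperator hα hα1 hg f.continuous.Icc_extend'.continuousOn).domRestrict⟩

theorem contractingWith_abMap {K : ℝ≥0} (hα : 0 < α) (hα1 : α ≤ 1) (ha : 0 ≤ a) (hb : 0 ≤ b)
    (hg : LipschitzWith K g) (hT : 0 ≤ T) (hsmall : K * (a + b * T ^ α / α) < 1) :
    ContractingWith (K * (a + b * T ^ α / α)).toNNReal
      (abMap α a b g φc hα hα1 hg.continuous hT) := by
  refine ⟨Real.toNNReal_lt_one.2 hsmall, LipschitzWith.of_dist_le' fun f₁ f₂ =>
    (ContinuousMap.dist_le (by positivity)).2 fun ⟨t, ht⟩ => ?_⟩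
  have hext : ∀ s, ‖IccExtend hT f₁ s - IccExtend hT f₂ s‖ ≤ dist f₁ f₂ := fun s => by
    rw [IccExtend_apply, IccExtend_apply, ← dist_eq_norm]
    exact ContinuousMap.dist_apply_le_dist _
  calc _ ≤ K * (a + b * t ^ α / α) * dist f₁ f₂ :=
        (dist_eq_norm _ _).trans_le <| norm_abOperator_sub_le hα ha hb hg
          f₁.continuous.Icc_extend'.continuousOn f₂.continuous.Icc_extend'.continuousOn ht.1
          fun s _ => hext s
    _ ≤ K * (a + b * T ^ α / α) * dist f₁ f₂ := by
        gcongr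
        exacts [ht.1, ht.2]

theorem IccExtend_eq_abOperator_of_isFixedPt {hα : 0 < α} {hα1 : α ≤ 1} {hg : Continuous g}
    {hT : 0 ≤ T} {f : C(Icc 0 T, E)} (hf : IsFixedPt (abMap α a b g φc hα hα1 hg hT) f)
    (ht : t ∈ Icc 0 T) : IccExtend hT f t = abOperator α a b g φc (IccExtend hT f) t :=
  (IccExtend_of_mem hT f ht).trans (DFunLike.congr_fun hf ⟨t, ht⟩).symm

theorem isFixedPt_abMap_domRestrict (hα : 0 < α) (hα1 : α ≤ 1) (hg : Continuous g) (hT : 0 ≤ T)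
    (hφ : ContinuousOn φ (Icc 0 T)) (hsol : ∀ t ∈ Icc 0 T, φ t = abOperator α a b g φc φ t) :
    IsFixedPt (abMap α a b g φc hα hα1 hg hT) ⟨(Icc 0 T).domRestrict φ, hφ.domRestrict⟩ := by
  ext ⟨t, ht⟩
  exact (abOperator_congr (fun s hs => IccExtend_of_mem hT _ hs) ht).trans (hsol t ht).symm

end Operator

/-- Existence and uniqueness of a continuous solution `φ : [0,T₁] → E` of the
Atangana–Baleanu fractional integral equation
`φ(t) = φ_c + ((1−α)/B(α)) g(φ(t)) + (α/(B(α)Γ(α))) ∫_0^t (t−s)^{α−1} g(φ(s)) ds`,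
when `g` is Lipschitz with constant `C` and
`C((1−α)/B(α) + T₁^α/(B(α)Γ(α))) < 1`. -/
theorem ab_integral_equation_existence_uniqueness
    {E : Type*} [NormedAddCommGroup E] [NormedSpace ℝ E] [CompleteSpace E]
    (α : ℝ) (hα : α ∈ Set.Ioo (0 : ℝ) 1)
    (B : ℝ) (hB : B = 1 - α + α / Real.Gamma α)
    (g : E → E) (C : ℝ) (hC : 0 ≤ C)
    (hg : ∀ x y : E, ‖g x - g y‖ ≤ C * ‖x - y‖)
    (φc : E) (T₁ : ℝ) (hT₁ : 0 < T₁)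
    (hsmall : C * ((1 - α) / B + T₁ ^ α / (B * Real.Gamma α)) < 1) :
    (∃ φ : ℝ → E, ContinuousOn φ (Set.Icc 0 T₁) ∧
        ∀ t ∈ Set.Icc (0 : ℝ) T₁,
          φ t = φc + ((1 - α) / B) • g (φ t)
            + (α / (B * Real.Gamma α)) • ∫ s in (0 : ℝ)..t, (t - s) ^ (α - 1) • g (φ s)) ∧
      (∀ φ₁ φ₂ : ℝ → E, ContinuousOn φ₁ (Set.Icc 0 T₁) → ContinuousOn φ₂ (Set.Icc 0 T₁) →
        (∀ t ∈ Set.Icc (0 : ℝ) T₁,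
          φ₁ t = φc + ((1 - α) / B) • g (φ₁ t)
            + (α / (B * Real.Gamma α)) • ∫ s in (0 : ℝ)..t, (t - s) ^ (α - 1) • g (φ₁ s)) →
        (∀ t ∈ Set.Icc (0 : ℝ) T₁,
          φ₂ t = φc + ((1 - α) / B) • g (φ₂ t)
            + (α / (B * Real.Gamma α)) • ∫ s in (0 : ℝ)..t, (t - s) ^ (α - 1) • g (φ₂ s)) →
        ∀ t ∈ Set.Icc (0 : ℝ) T₁, φ₁ t = φ₂ t) := by
  obtain ⟨hα0, hα1⟩ := hα
  have hΓ : 0 < Real.Gamma α := Real.Gamma_pos_of_pos hα0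
  have hBpos : 0 < B := by rw [hB]; linarith [div_pos hα0 hΓ]
  have hLip : LipschitzWith ⟨C, hC⟩ g :=
    LipschitzWith.of_dist_le_mul fun x y => by rw [dist_eq_norm, dist_eq_norm]; exact hg x y
  have hbT : α / (B * Real.Gamma α) * T₁ ^ α / α = T₁ ^ α / (B * Real.Gamma α) := by field_simp
  have hk : (⟨C, hC⟩ : ℝ≥0) * ((1 - α) / B + α / (B * Real.Gamma α) * T₁ ^ α / α) < 1 := by
    simpa only [NNReal.coe_mk, hbT] using hsmall
  have hcontr := contractingWith_abMap (φc := φc) hα0 hα1.le (div_nonneg (by linarith) hBpos.le)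
    (div_nonneg hα0.le (mul_pos hBpos hΓ).le) hLip hT₁.le hk
  set u := ContractingWith.fixedPoint _ hcontr
  exact ⟨⟨IccExtend hT₁.le u, u.continuous.Icc_extend'.continuousOn,
      fun t ht => IccExtend_eq_abOperator_of_isFixedPt hcontr.fixedPoint_isFixedPt ht⟩,
    fun φ₁ φ₂ hφ₁ hφ₂ h₁ h₂ t ht => DFunLike.congr_fun (hcontr.fixedPoint_unique'
      (isFixedPt_abMap_domRestrict _ _ _ _ hφ₁ h₁) (isFixedPt_abMap_domRestrict _ _ _ _ hφ₂ h₂))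
      ⟨t, ht⟩⟩
end
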